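/- Assume a = 1/4 (with b, d, e ∈ ℝ arbitrary). Let u be a solution of the Longstaff–Schwartz equation on Ω, and let ε ∈ ℝ. Then the function w(x,y,t) = exp( (b·ε·e^{bt/2} · (4√x − ε·e^{bt/2}))/2 ) · u( (2√x − ε·e^{bt/2})²/4, y, t ) satisfies the Longstaff–Schwartz equation at every point (x,y,t) ∈ Ω with 2√x > ε·e^{bt/2}. -/

import Mathlib

/-- Partial derivative in `x`. -/
noncomputable def pdX (u : ℝ → ℝ → ℝ → ℝ) (x y t : ℝ) : ℝ := deriv (fun z => u z y t) x

/-- Partial derivative in `y`. -/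
noncomputable def pdY (u : ℝ → ℝ → ℝ → ℝ) (x y t : ℝ) : ℝ := deriv (fun z => u x z t) y

/-- Partial derivative in `t`. -/
noncomputable def pdT (u : ℝ → ℝ → ℝ → ℝ) (x y t : ℝ) : ℝ := deriv (fun z => u x y z) t

/-- Second partial derivative in `x`. -/
noncomputable def pdXX (u : ℝ → ℝ → ℝ → ℝ) (x y t : ℝ) : ℝ := deriv (fun z => pdX u z y t) x

/-- Second partial derivative in `y`. -/
noncomputable def pdYY (u : ℝ → ℝ → ℝ → ℝ) (x y t : ℝ) : ℝ := deriv (fun z => pdY u x z t) y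

/-- The domain `Ω = {(x,y,t) : x > 0, y > 0}`. -/
def Omega : Set (ℝ × ℝ × ℝ) := {p | 0 < p.1 ∧ 0 < p.2.1}

/-- The Longstaff–Schwartz (Kolmogorov backward) equation
`u_t = −((a−bx)·u_x + (d−ey)·u_y + (x/2)·u_xx + (y/2)·u_yy)` holds at the point `(x,y,t)`. -/
def LSEq (a b d e : ℝ) (u : ℝ → ℝ → ℝ → ℝ) (x y t : ℝ) : Prop :=
  pdT u x y t =
    -((a - b * x) * pdX u x y t + (d - e * y) * pdY u x y t +
      x / 2 * pdXX u x y t + y / 2 * pdYY u x y t)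

/-- `u` is a solution of the Longstaff–Schwartz equation on `Ω`: it is C² on `Ω` and
satisfies the equation at every point of `Ω`. -/
def IsLSSolution (a b d e : ℝ) (u : ℝ → ℝ → ℝ → ℝ) : Prop :=
  ContDiffOn ℝ 2 (fun p : ℝ × ℝ × ℝ => u p.1 p.2.1 p.2.2) Omega ∧
  ∀ x y t : ℝ, 0 < x → 0 < y → LSEq a b d e u x y t

/-!
In the variable `s = √x` the `x`-part of the operator is
`(a - 1/4) / (2 s) · ∂ₛ + ∂ₛ² / 8 - (b s / 2) ∂ₛ`, so for `a = 1/4` it is an Ornstein–Uhlenbeck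
operator. Such an operator is invariant under the moving translation `s ↦ s - c(t)/2` along a
solution `c(t) = ε e^{bt/2}` of the drift equation `c' = b c / 2`, up to the exponential factor
`e^G` with `G = b c (4 s - c) / 2`. The proof checks this directly: with `φ = (s - c/2)²`, the
chain rule expresses the derivatives of `w = e^G · u(φ, y, t)` through those of `u` at
`(φ, y, t)`, where the equation for `u` holds.
-/

open Filter Topology Real

def uncurry3 (u : ℝ → ℝ → ℝ → ℝ) (p : ℝ × ℝ × ℝ) : ℝ := u p.1 p.2.1 p.2.2

lemma isOpen_Omega : IsOpen Omega :=
  (isOpen_lt continuous_const continuous_fst).and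
    (isOpen_lt continuous_const (continuous_fst.comp continuous_snd))

lemma IsLSSolution.contDiffAt {a b d e : ℝ} {u : ℝ → ℝ → ℝ → ℝ} (hu : IsLSSolution a b d e u)
    {x y t : ℝ} (hx : 0 < x) (hy : 0 < y) : ContDiffAt ℝ 2 (uncurry3 u) (x, y, t) :=
  hu.1.contDiffAt (isOpen_Omega.mem_nhds ⟨hx, hy⟩)

section PartialDerivatives

variable {u : ℝ → ℝ → ℝ → ℝ}

lemma hasDerivAt_uncurry3_comp_fderiv {f g : ℝ → ℝ} {f' g' y z : ℝ}
    (hu : DifferentiableAt ℝ (uncurry3 u) (f z, y, g z))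
    (hf : HasDerivAt f f' z) (hg : HasDerivAt g g' z) :
    HasDerivAt (fun w => u (f w) y (g w)) (fderiv ℝ (uncurry3 u) (f z, y, g z) (f', 0, g')) z :=
  HasFDerivAt.comp_hasDerivAt (l := uncurry3 u) (f := fun w => (f w, y, g w)) z hu.hasFDerivAt
    (hf.prodMk ((hasDerivAt_const z y).prodMk hg))

lemma pdX_eq_fderiv {x y t : ℝ} (hu : DifferentiableAt ℝ (uncurry3 u) (x, y, t)) :
    pdX u x y t = fderiv ℝ (uncurry3 u) (x, y, t) (1, 0, 0) :=
  (hasDerivAt_uncurry3_comp_fderiv (g := fun _ => t) hu (hasDerivAt_id x)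
    (hasDerivAt_const x t)).deriv

lemma pdT_eq_fderiv {x y t : ℝ} (hu : DifferentiableAt ℝ (uncurry3 u) (x, y, t)) :
    pdT u x y t = fderiv ℝ (uncurry3 u) (x, y, t) (0, 0, 1) :=
  (hasDerivAt_uncurry3_comp_fderiv (f := fun _ => x) hu (hasDerivAt_const t x)
    (hasDerivAt_id t)).deriv

lemma hasDerivAt_uncurry3_comp {f g : ℝ → ℝ} {f' g' y z : ℝ}
    (hu : DifferentiableAt ℝ (uncurry3 u) (f z, y, g z))
    (hf : HasDerivAt f f' z) (hg : HasDerivAt g g' z) :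
    HasDerivAt (fun w => u (f w) y (g w))
      (f' * pdX u (f z) y (g z) + g' * pdT u (f z) y (g z)) z := by
  convert hasDerivAt_uncurry3_comp_fderiv hu hf hg using 1
  have hsplit : ((f', 0, g') : ℝ × ℝ × ℝ) = f' • (1, 0, 0) + g' • (0, 0, 1) := by simp
  rw [pdX_eq_fderiv hu, pdT_eq_fderiv hu, hsplit, map_add, map_smul, map_smul, smul_eq_mul,
    smul_eq_mul]

lemma differentiableAt_pdX {x y t : ℝ} (hu : ContDiffAt ℝ 2 (uncurry3 u) (x, y, t)) :
    DifferentiableAt ℝ (fun z => pdX u z y t) x := by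
  have hline : Continuous fun z : ℝ => ((z, y, t) : ℝ × ℝ × ℝ) := by fun_prop
  have hdiff : ∀ᶠ z in 𝓝 x, DifferentiableAt ℝ (uncurry3 u) (z, y, t) :=
    hline.tendsto x |>.eventually <|
      (hu.eventually (by simp)).mono fun p hp => hp.differentiableAt (by norm_num)
  have hfderiv : DifferentiableAt ℝ (fderiv ℝ (uncurry3 u)) (x, y, t) :=
    (hu.fderiv_right (m := 1) (by norm_num)).differentiableAt one_ne_zero
  refine DifferentiableAt.congr_of_eventuallyEq ?_ (hdiff.mono fun z hz => pdX_eq_fderiv hz)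
  exact (hfderiv.comp x (by fun_prop)).clm_apply (differentiableAt_const _)

lemma differentiableAt_slice_x {x y t : ℝ}
    (hu : DifferentiableAt ℝ (uncurry3 u) (x, y, t)) : DifferentiableAt ℝ (u · y t) x :=
  (hasDerivAt_uncurry3_comp (g := fun _ => t) hu (hasDerivAt_id' x)
    (hasDerivAt_const x t)).differentiableAt

end PartialDerivatives

noncomputable def gaugeComp (G φ : ℝ → ℝ → ℝ) (u : ℝ → ℝ → ℝ → ℝ) (x y t : ℝ) : ℝ :=
  exp (G x t) * u (φ x t) y t

section GaugeComp

variable {G φ : ℝ → ℝ → ℝ} {u : ℝ → ℝ → ℝ → ℝ} {x y t : ℝ}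

lemma pdY_gaugeComp : pdY (gaugeComp G φ u) x y t = exp (G x t) * pdY u (φ x t) y t :=
  deriv_const_mul_field _

lemma pdYY_gaugeComp : pdYY (gaugeComp G φ u) x y t = exp (G x t) * pdYY u (φ x t) y t := by
  simp only [pdYY, pdY_gaugeComp]
  exact deriv_const_mul_field _

lemma pdX_gaugeComp {G' φ' : ℝ} (hG : HasDerivAt (G · t) G' x)
    (hφ : HasDerivAt (φ · t) φ' x) (hu : DifferentiableAt ℝ (u · y t) (φ x t)) :
    pdX (gaugeComp G φ u) x y t =
      exp (G x t) * (G' * u (φ x t) y t + φ' * pdX u (φ x t) y t) := by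
  have hu_φ : HasDerivAt (fun z => u (φ z t) y t) (pdX u (φ x t) y t * φ') x :=
    HasDerivAt.comp (h := (φ · t)) x hu.hasDerivAt hφ
  exact (hG.exp.fun_mul hu_φ).deriv.trans (by ring)

lemma pdT_gaugeComp {Gt φt : ℝ} (hG : HasDerivAt (G x ·) Gt t) (hφ : HasDerivAt (φ x ·) φt t)
    (hu : DifferentiableAt ℝ (uncurry3 u) (φ x t, y, t)) :
    pdT (gaugeComp G φ u) x y t =
      exp (G x t) * (Gt * u (φ x t) y t + φt * pdX u (φ x t) y t + pdT u (φ x t) y t) := by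
  change deriv (fun τ => exp (G x τ) * u (φ x τ) y τ) t = _
  rw [(hG.exp.fun_mul (hasDerivAt_uncurry3_comp hu hφ (hasDerivAt_id' t))).deriv]
  ring

lemma pdXX_gaugeComp {G' φ' : ℝ → ℝ} {G'' φ'' : ℝ}
    (hG : ∀ᶠ z in 𝓝 x, HasDerivAt (G · t) (G' z) z)
    (hφ : ∀ᶠ z in 𝓝 x, HasDerivAt (φ · t) (φ' z) z)
    (hG' : HasDerivAt G' G'' x) (hφ' : HasDerivAt φ' φ'' x)
    (hu : ContDiffAt ℝ 2 (uncurry3 u) (φ x t, y, t)) :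
    pdXX (gaugeComp G φ u) x y t =
      exp (G x t) * ((G'' + G' x ^ 2) * u (φ x t) y t +
        (2 * G' x * φ' x + φ'') * pdX u (φ x t) y t + φ' x ^ 2 * pdXX u (φ x t) y t) := by
  have hGx := hG.self_of_nhds
  have hφx := hφ.self_of_nhds
  have hu_near : ∀ᶠ z in 𝓝 x, DifferentiableAt ℝ (u · y t) (φ z t) := by
    have hline : ContinuousAt (fun z => ((φ z t, y, t) : ℝ × ℝ × ℝ)) x :=
      hφx.continuousAt.prodMk (continuousAt_const.prodMk continuousAt_const)
    exact hline.eventually (hu.eventually (by simp)) |>.mono fun z hz =>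
      differentiableAt_slice_x (hz.differentiableAt (by norm_num))
  have hpdX : (pdX (gaugeComp G φ u) · y t) =ᶠ[𝓝 x]
      fun z => exp (G z t) * (G' z * u (φ z t) y t + φ' z * pdX u (φ z t) y t) := by
    filter_upwards [hG, hφ, hu_near] with z hGz hφz huz
    exact pdX_gaugeComp hGz hφz huz
  have hu_φ : HasDerivAt (fun z => u (φ z t) y t) (φ' x * pdX u (φ x t) y t) x := by
    rw [mul_comm]; exact hu_near.self_of_nhds.hasDerivAt.comp x hφx
  have hux_φ : HasDerivAt (fun z => pdX u (φ z t) y t) (φ' x * pdXX u (φ x t) y t) x := by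
    rw [mul_comm]; exact (differentiableAt_pdX hu).hasDerivAt.comp x hφx
  rw [pdXX, hpdX.deriv_eq,
    (hGx.exp.fun_mul ((hG'.fun_mul hu_φ).fun_add (hφ'.fun_mul hux_φ))).deriv]
  ring

end GaugeComp

lemma hasDerivAt_inv_sqrt {x : ℝ} (hx : 0 < x) :
    HasDerivAt (fun z => (√z)⁻¹) (-(√x)⁻¹ / (2 * x)) x := by
  have hsx : √x ≠ 0 := (Real.sqrt_pos.2 hx).ne'
  refine ((Real.hasDerivAt_sqrt hx.ne').inv hsx).congr_deriv ?_
  rw [Real.sq_sqrt hx.le]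
  field_simp

noncomputable def lsGauge (b ε x t : ℝ) : ℝ :=
  b * ε * exp (b * t / 2) * (4 * √x - ε * exp (b * t / 2)) / 2

noncomputable def lsShift (b ε x t : ℝ) : ℝ := (2 * √x - ε * exp (b * t / 2)) ^ 2 / 4

section LSTransform

variable (b ε : ℝ) {x : ℝ} (t : ℝ)

lemma hasDerivAt_lsGauge_x (hx : 0 < x) :
    HasDerivAt (lsGauge b ε · t) (b * ε * exp (b * t / 2) * (√x)⁻¹) x := by
  have hsx : √x ≠ 0 := (Real.sqrt_pos.2 hx).ne'
  refine ((((Real.hasDerivAt_sqrt hx.ne').const_mul 4).sub_const _).const_mul _ |>.div_const 2)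
    |>.congr_deriv ?_
  field_simp
  ring

lemma hasDerivAt_lsShift_x (hx : 0 < x) :
    HasDerivAt (lsShift b ε · t) (1 - ε * exp (b * t / 2) / 2 * (√x)⁻¹) x := by
  have hsx : √x ≠ 0 := (Real.sqrt_pos.2 hx).ne'
  refine ((((Real.hasDerivAt_sqrt hx.ne').const_mul 2).sub_const _).pow 2 |>.div_const 4)
    |>.congr_deriv ?_
  field_simp
  ring

lemma hasDerivAt_exp_mul_half :
    HasDerivAt (fun τ => exp (b * τ / 2)) (exp (b * t / 2) * (b / 2)) t :=
  (((hasDerivAt_id' t).const_mul b).div_const 2).exp.congr_deriv (by ring)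

lemma hasDerivAt_lsGauge_t (x : ℝ) :
    HasDerivAt (lsGauge b ε x ·)
      (b ^ 2 * ε * exp (b * t / 2) * (2 * √x - ε * exp (b * t / 2)) / 2) t := by
  have hE := hasDerivAt_exp_mul_half b t
  refine ((hE.const_mul (b * ε)).fun_mul ((hE.const_mul ε).const_sub (4 * √x)) |>.div_const 2)
    |>.congr_deriv ?_
  ring

lemma hasDerivAt_lsShift_t (x : ℝ) :
    HasDerivAt (lsShift b ε x ·)
      (-(b * ε * exp (b * t / 2) * (2 * √x - ε * exp (b * t / 2))) / 4) t := by
  refine (((hasDerivAt_exp_mul_half b t).const_mul ε).const_sub (2 * √x) |>.pow 2 |>.div_const 4)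
    |>.congr_deriv ?_
  ring

end LSTransform

theorem ls_symmetry_a_quarter_exp (a b d e : ℝ) (ha : a = 1 / 4)
    (u : ℝ → ℝ → ℝ → ℝ) (hu : IsLSSolution a b d e u) (ε : ℝ) :
    ∀ x y t : ℝ, 0 < x → 0 < y → 2 * Real.sqrt x > ε * Real.exp (b * t / 2) →
      LSEq a b d e
        (fun x y t =>
          Real.exp (b * ε * Real.exp (b * t / 2) *
              (4 * Real.sqrt x - ε * Real.exp (b * t / 2)) / 2) *
            u ((2 * Real.sqrt x - ε * Real.exp (b * t / 2)) ^ 2 / 4) y t)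
        x y t := by
  intro x y t hx hy hr
  have hφ : 0 < lsShift b ε x t := by unfold lsShift; nlinarith
  have hU := hu.contDiffAt (t := t) hφ hy
  have hWx := pdX_gaugeComp (u := u) (y := y) (hasDerivAt_lsGauge_x b ε t hx)
    (hasDerivAt_lsShift_x b ε t hx) (differentiableAt_slice_x (hU.differentiableAt (by norm_num)))
  have hWxx := pdXX_gaugeComp (u := u)
    ((lt_mem_nhds hx).mono fun z hz => hasDerivAt_lsGauge_x b ε t hz)
    ((lt_mem_nhds hx).mono fun z hz => hasDerivAt_lsShift_x b ε t hz)
    ((hasDerivAt_inv_sqrt hx).const_mul _) (((hasDerivAt_inv_sqrt hx).const_mul _).const_sub 1) hU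
  have hWt := pdT_gaugeComp (u := u) (y := y) (hasDerivAt_lsGauge_t b ε t x)
    (hasDerivAt_lsShift_t b ε t x) (hU.differentiableAt (by norm_num))
  have hpde := hu.2 _ y t hφ hy
  change LSEq a b d e (gaugeComp (lsGauge b ε) (lsShift b ε) u) x y t
  rw [LSEq] at hpde ⊢
  rw [hWt, hWx, hWxx, pdY_gaugeComp, pdYY_gaugeComp, hpde, ha]
  obtain ⟨s, hs, rfl⟩ : ∃ s, 0 < s ∧ x = s ^ 2 :=
    ⟨√x, Real.sqrt_pos.2 hx, (Real.sq_sqrt hx.le).symm⟩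
  have hφs : lsShift b ε (s ^ 2) t = (2 * s - ε * exp (b * t / 2)) ^ 2 / 4 := by
    rw [lsShift, Real.sqrt_sq hs.le]
  rw [hφs, Real.sqrt_sq hs.le]
  field_simp
  ring
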